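/- arXiv:1304.0939 — 2 statements merged into one kernel-verified Lean document; each statement's English description precedes it below -/
import Mathlib

section
/- Let D_n = ⟨a, b | aⁿ = 1, b² = 1, bab⁻¹ = a⁻¹⟩ with n even, let ε be a primitive n-th root of unity, and let α be the 2-cocycle on D_n given by α(aⁱ, aʲbᵏ) = 1 and α(aⁱb, aʲbᵏ) = εʲ. Then for each r ∈ {1, …, n/2}, the map ρ_r(aⁱbʲ) = A_rⁱ B^j, where A_r = diag(ε^r, ε^{1−r}) and B = [[0,1],[1,0]], is an α-twisted (projective) representation of D_n, i.e. ρ_r(x)ρ_r(y) = α(x,y)ρ_r(xy) for all x, y ∈ D_n. -/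
/-- For `n` even, `ε` a primitive `n`-th root of unity, and the 2-cocycle `α` on the
dihedral group `Dₙ` given by `α(aⁱ, aʲbᵏ) = 1`, `α(aⁱb, aʲbᵏ) = εʲ`, the map
`ρ_r(aⁱbʲ) = Aᵣⁱ Bʲ` with `Aᵣ = diag(εʳ, ε¹⁻ʳ)` and `B = [[0,1],[1,0]]` is an
`α`-twisted representation of `Dₙ` for each `r ∈ {1, …, n/2}`:
`ρ_r(e) = 1` and `ρ_r(x)ρ_r(y) = α(x,y)ρ_r(xy)`.  Here, in Mathlib's
`DihedralGroup n`, `r i = aⁱ` and `sr i = a⁻ⁱb`. -/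
theorem stmt_5 (n : ℕ) (hn0 : 0 < n) (hn : Even n)
    (ε : ℂ) (hε : IsPrimitiveRoot ε n)
    (α : DihedralGroup n → DihedralGroup n → ℂ)
    (hα1 : ∀ i j : ZMod n, α (DihedralGroup.r i) (DihedralGroup.r j) = 1)
    (hα2 : ∀ i j : ZMod n, α (DihedralGroup.r i) (DihedralGroup.sr j) = 1)
    (hα3 : ∀ i j : ZMod n, α (DihedralGroup.sr i) (DihedralGroup.r j) = ε ^ j.val)
    (hα4 : ∀ i j : ZMod n, α (DihedralGroup.sr i) (DihedralGroup.sr j) = ε ^ (-j).val)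
    (r : ℕ) (hr1 : 1 ≤ r) (hr2 : r ≤ n / 2)
    (ρ : DihedralGroup n → Matrix (Fin 2) (Fin 2) ℂ)
    (hρ1 : ∀ i : ZMod n,
      ρ (DihedralGroup.r i) =
        (Matrix.diagonal ![ε ^ (r : ℤ), ε ^ (1 - (r : ℤ))]) ^ i.val)
    (hρ2 : ∀ i : ZMod n,
      ρ (DihedralGroup.sr i) =
        (Matrix.diagonal ![ε ^ (r : ℤ), ε ^ (1 - (r : ℤ))]) ^ (-i).val *
          !![0, 1; 1, 0]) :
    ρ 1 = 1 ∧ ∀ x y, ρ x * ρ y = α x y • ρ (x * y) := by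
  haveI : NeZero n := ⟨hn0.ne'⟩
  have hε0 : ε ≠ 0 := hε.ne_zero hn0.ne'
  have hεn : ε ^ (n : ℤ) = 1 := by
    rw [zpow_natCast]; exact hε.pow_eq_one
  -- zpow depends only on exponent mod n
  have key : ∀ a b : ℤ, ((a : ZMod n) = (b : ZMod n)) → ε ^ a = ε ^ b := by
    intro a b h
    rw [ZMod.intCast_eq_intCast_iff] at h
    obtain ⟨k, hk⟩ := h.dvd
    have : a = b - n * k := by omega
    rw [this, zpow_sub₀ hε0, zpow_mul, hεn, one_zpow, div_one]
  have hdiag : ∀ x y : ℂ, Matrix.diagonal ![x, y] = !![x, 0; 0, y] := by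
    intro x y
    ext i j
    fin_cases i <;> fin_cases j <;> simp [Matrix.diagonal]
  -- power formula
  have hA : ∀ m : ℕ, (Matrix.diagonal ![ε ^ (r : ℤ), ε ^ (1 - (r : ℤ))]) ^ m =
      !![ε ^ ((r : ℤ) * m), 0; 0, ε ^ ((1 - (r : ℤ)) * m)] := by
    intro m
    induction m with
    | zero => simp [Matrix.one_fin_two]
    | succ m ih =>
        rw [pow_succ, ih, hdiag, Matrix.mul_fin_two]
        push_cast
        rw [mul_add, mul_add, mul_one, mul_one, zpow_add₀ hε0, zpow_add₀ hε0]
        norm_num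
  constructor
  · rw [DihedralGroup.one_def, hρ1, ZMod.val_zero, pow_zero]
  · intro x y
    rcases x with i | i <;> rcases y with j | j
    · rw [DihedralGroup.r_mul_r, hα1, one_smul, hρ1, hρ1, hρ1, hA, hA, hA]
      ext a b
      fin_cases a <;> fin_cases b <;>
        simp [Matrix.mul_apply, Fin.sum_univ_two] <;>
      · simp only [← zpow_natCast ε, ← zpow_add₀ hε0]
        apply key
        push_cast [ZMod.natCast_val, ZMod.cast_id, ZMod.intCast_zmod_cast]
        ring
    · rw [DihedralGroup.r_mul_sr, hα2, one_smul, hρ1, hρ2, hρ2, hA, hA, hA]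
      ext a b
      fin_cases a <;> fin_cases b <;>
        simp [Matrix.mul_apply, Fin.sum_univ_two] <;>
      · simp only [← zpow_natCast ε, ← zpow_add₀ hε0]
        apply key
        push_cast [ZMod.natCast_val, ZMod.cast_id, ZMod.intCast_zmod_cast]
        ring
    · rw [DihedralGroup.sr_mul_r, hα3, hρ1, hρ2, hρ2, hA, hA, hA]
      ext a b
      fin_cases a <;> fin_cases b <;>
        simp [Matrix.mul_apply, Fin.sum_univ_two, Matrix.smul_apply, smul_eq_mul] <;>
      · simp only [← zpow_natCast ε, ← zpow_add₀ hε0]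
        apply key
        push_cast [ZMod.natCast_val, ZMod.cast_id, ZMod.intCast_zmod_cast]
        ring
    · rw [DihedralGroup.sr_mul_sr, hα4, hρ2, hρ2, hρ1, hA, hA, hA]
      ext a b
      fin_cases a <;> fin_cases b <;>
        simp [Matrix.mul_apply, Fin.sum_univ_two, Matrix.smul_apply, smul_eq_mul] <;>
      · simp only [← zpow_natCast ε, ← zpow_add₀ hε0]
        apply key
        push_cast [ZMod.natCast_val, ZMod.cast_id, ZMod.intCast_zmod_cast]
        ring
end

section
/- For n even, the function α: D_n × D_n → ℂ* defined by α(aⁱ, aʲbᵏ) = 1 and α(aⁱb, aʲbᵏ) = εʲ, where ε is a primitive n-th root of unity, is a 2-cocycle on the dihedral group D_n. -/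
/-- For `n` even, the function `α : Dₙ × Dₙ → ℂ*` with `α(aⁱ, aʲbᵏ) = 1` and
`α(aⁱb, aʲbᵏ) = εʲ` (`ε` a primitive `n`-th root of unity) is a 2-cocycle on the
dihedral group `Dₙ`.  Here `Dₙ` is Mathlib's `DihedralGroup n`, in which
`r i = aⁱ` and `sr i = baⁱ = a⁻ⁱb`, so the element `sr j` has the normal form
`aʲ'b` with `j' = -j`. -/
theorem stmt_6 (n : ℕ) (hn0 : 0 < n) (hn : Even n)
    (ε : ℂ) (hε : IsPrimitiveRoot ε n)
    (α : DihedralGroup n → DihedralGroup n → ℂ)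
    (hα1 : ∀ i j : ZMod n, α (DihedralGroup.r i) (DihedralGroup.r j) = 1)
    (hα2 : ∀ i j : ZMod n, α (DihedralGroup.r i) (DihedralGroup.sr j) = 1)
    (hα3 : ∀ i j : ZMod n, α (DihedralGroup.sr i) (DihedralGroup.r j) = ε ^ j.val)
    (hα4 : ∀ i j : ZMod n, α (DihedralGroup.sr i) (DihedralGroup.sr j) = ε ^ (-j).val) :
    (∀ x y, α x y ≠ 0) ∧
    (∀ x y z, α x y * α (x * y) z = α y z * α x (y * z)) := by
  haveI : NeZero n := ⟨hn0.ne'⟩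
  have hne : ε ≠ 0 := hε.ne_zero hn0.ne'
  have hεn : ε ^ n = 1 := hε.pow_eq_one
  have key : ∀ a b : ZMod n, ε ^ (a + b).val = ε ^ a.val * ε ^ b.val := by
    intro a b
    rw [ZMod.val_add, ← pow_add]
    conv_rhs => rw [← Nat.mod_add_div (a.val + b.val) n]
    rw [pow_add, pow_mul, hεn, one_pow, mul_one]
  constructor
  · intro x y
    rcases x with i | i <;> rcases y with j | j <;>
      simp [hα1, hα2, hα3, hα4, hne, pow_ne_zero]
  · intro x y z
    rcases x with i | i <;> rcases y with j | j <;> rcases z with k | k <;>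
      simp only [DihedralGroup.r_mul_r, DihedralGroup.r_mul_sr,
        DihedralGroup.sr_mul_r, DihedralGroup.sr_mul_sr,
        hα1, hα2, hα3, hα4, one_mul, mul_one]
    · exact (key j k).symm
    · rw [show -(k - j) = j + -k by ring, key]
    · rw [show (-j : ZMod n) = k + -(j + k) by ring, key]
    · rw [show (-j : ZMod n) = -k + (k - j) by ring, key]
end
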